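/- arXiv:2303.14671 — 2 statements merged into one kernel-verified Lean document; each statement's English description precedes it below -/
import Mathlib

section
/- Let G be a finite median graph and H a convex subgraph of G. Then the crossing graph H^# of H is isomorphic to the induced subgraph of G^# on the set of Θ-classes of G that occur in H, via the map sending each Θ-class of H to the unique Θ-class of G containing it. In particular, H^# is (isomorphic to) an induced subgraph of G^#. -/
open SimpleGraph Polynomial

/-- The hypercube `Q_n`: vertices are functions `Fin n → Bool`, two vertices adjacent
iff they differ in exactly one coordinate. -/
def hypercube (n : ℕ) : SimpleGraph (Fin n → Bool) where
  Adj x y := ∃! i, x i ≠ y i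
  symm := ⟨by
    rintro x y ⟨i, hi, hu⟩
    exact ⟨i, hi.symm, fun j hj => hu j hj.symm⟩⟩
  loopless := ⟨by
    rintro x ⟨i, hi, -⟩
    exact hi rfl⟩

/-- `f` is an isometric embedding of `G` into `H` (distances are preserved); its image is
an isometric subgraph of `H`. -/
def IsIsometricEmbedding {V W : Type*} (G : SimpleGraph V) (H : SimpleGraph W)
    (f : V → W) : Prop :=
  Function.Injective f ∧ ∀ u v : V, H.dist (f u) (f v) = G.dist u v

/-- A partial cube: a connected graph isomorphic to an isometric subgraph of some hypercube. -/
def IsPartialCube {V : Type*} (G : SimpleGraph V) : Prop :=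
  G.Connected ∧ ∃ (n : ℕ) (f : V → (Fin n → Bool)), IsIsometricEmbedding G (hypercube n) f

/-- The Djoković–Winkler relation on (unordered) edges: `e = uv` and `f = xy` are related iff
`d(u,x) + d(v,y) ≠ d(u,y) + d(v,x)`. -/
def DWRel {V : Type*} (G : SimpleGraph V) (e f : Sym2 V) : Prop :=
  ∃ u v x y : V, e = s(u, v) ∧ f = s(x, y) ∧
    G.dist u x + G.dist v y ≠ G.dist u y + G.dist v x

/-- The set of edges of `G` that are Θ-related to `e`. -/
def thetaClassOf {V : Type*} (G : SimpleGraph V) (e : Sym2 V) : Set (Sym2 V) :=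
  {f | f ∈ G.edgeSet ∧ DWRel G e f}

/-- `C` is a Θ-class of `G`: the class of some edge of `G` under the Djoković–Winkler
relation. -/
def IsThetaClass {V : Type*} (G : SimpleGraph V) (C : Set (Sym2 V)) : Prop :=
  ∃ e ∈ G.edgeSet, C = thetaClassOf G e

/-- `W_{uv}`: the set of vertices strictly closer to `u` than to `v`. -/
def sideW {V : Type*} (G : SimpleGraph V) (u v : V) : Set V :=
  {w | G.dist u w < G.dist v w}

/-- Two Θ-classes `C₁ = F_{ab}` and `C₂ = F_{uv}` cross: all four sets
`W_{ab} ∩ W_{uv}`, `W_{ba} ∩ W_{uv}`, `W_{ab} ∩ W_{vu}`, `W_{ba} ∩ W_{vu}` are nonempty. -/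
def Crosses {V : Type*} (G : SimpleGraph V) (C₁ C₂ : Set (Sym2 V)) : Prop :=
  ∃ a b u v : V, G.Adj a b ∧ G.Adj u v ∧
    C₁ = thetaClassOf G s(a, b) ∧ C₂ = thetaClassOf G s(u, v) ∧
    (sideW G a b ∩ sideW G u v).Nonempty ∧ (sideW G b a ∩ sideW G u v).Nonempty ∧
    (sideW G a b ∩ sideW G v u).Nonempty ∧ (sideW G b a ∩ sideW G v u).Nonempty

lemma Crosses.symm {V : Type*} {G : SimpleGraph V} {C₁ C₂ : Set (Sym2 V)}
    (h : Crosses G C₁ C₂) : Crosses G C₂ C₁ := by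
  obtain ⟨a, b, u, v, hab, huv, h1, h2, n1, n2, n3, n4⟩ := h
  refine ⟨u, v, a, b, huv, hab, h2, h1, ?_, ?_, ?_, ?_⟩ <;> rw [Set.inter_comm]
  exacts [n1, n3, n2, n4]

/-- The crossing graph `G^#` of a partial cube `G`: vertices are the Θ-classes of `G`,
two Θ-classes being adjacent iff they cross. -/
def crossingGraph {V : Type*} (G : SimpleGraph V) :
    SimpleGraph {C : Set (Sym2 V) // IsThetaClass G C} where
  Adj C₁ C₂ := C₁ ≠ C₂ ∧ Crosses G C₁.1 C₂.1
  symm := ⟨fun _ _ h => ⟨h.1.symm, h.2.symm⟩⟩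
  loopless := ⟨fun _ h => h.1 rfl⟩

/-- A median graph: a connected graph in which every triple of vertices has a unique median. -/
def IsMedianGraph {V : Type*} (G : SimpleGraph V) : Prop :=
  G.Connected ∧ ∀ u v w : V, ∃! x : V,
    G.dist u x + G.dist x v = G.dist u v ∧
    G.dist u x + G.dist x w = G.dist u w ∧
    G.dist v x + G.dist x w = G.dist v w

/-- `α_i(G)`: the number of induced subgraphs of `G` isomorphic to the `i`-cube. -/
noncomputable def cubeCount {V : Type*} (G : SimpleGraph V) (i : ℕ) : ℕ :=
  Nat.card {s : Set V // Nonempty ((G.induce s) ≃g hypercube i)}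

/-- The cube polynomial `C(G,x) = Σ_i α_i(G) xⁱ`. -/
noncomputable def cubePoly {V : Type*} [Finite V] (G : SimpleGraph V) : Polynomial ℕ :=
  ∑ i ∈ Finset.range (Nat.card V + 1), Polynomial.C (cubeCount G i) * Polynomial.X ^ i

/-- `a_i(G)`: the number of `i`-cliques of `G` (note `a_0 = 1`, the empty clique). -/
noncomputable def cliqueCount {V : Type*} (G : SimpleGraph V) (i : ℕ) : ℕ :=
  Nat.card {s : Finset V // G.IsNClique i s}

/-- The clique polynomial `Cl(G,x) = Σ_i a_i(G) xⁱ`. -/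
noncomputable def cliquePoly {V : Type*} [Finite V] (G : SimpleGraph V) : Polynomial ℕ :=
  ∑ i ∈ Finset.range (Nat.card V + 1), Polynomial.C (cliqueCount G i) * Polynomial.X ^ i

/-- A set `S` of vertices is convex: every shortest path between vertices of `S`
stays inside `S`. -/
def ConvexSet {V : Type*} (G : SimpleGraph V) (S : Set V) : Prop :=
  ∀ u ∈ S, ∀ v ∈ S, ∀ p : G.Walk u v, p.length = G.dist u v → ∀ y ∈ p.support, y ∈ S

/-- The convex hull of a vertex set: the smallest convex set containing it. -/
def gConvexHull {V : Type*} (G : SimpleGraph V) (S : Set V) : Set V :=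
  ⋂₀ {T : Set V | ConvexSet G T ∧ S ⊆ T}

/-- The Θ-class `θ` occurs in (the subgraph of `G` induced by) `S`. -/
def OccursIn {V : Type*} (G : SimpleGraph V) (θ : Set (Sym2 V)) (S : Set V) : Prop :=
  ∃ a b : V, G.Adj a b ∧ a ∈ S ∧ b ∈ S ∧ s(a, b) ∈ θ

/-- A `θ₁,θ₂`-alternating 4-cycle `u v w x u`: edges `uv, xw ∈ θ₁` and `ux, vw ∈ θ₂`. -/
def AltFourCycle {V : Type*} (G : SimpleGraph V) (θ₁ θ₂ : Set (Sym2 V)) (u v w x : V) : Prop :=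
  G.Adj u v ∧ G.Adj v w ∧ G.Adj w x ∧ G.Adj x u ∧ u ≠ w ∧ v ≠ x ∧
  s(u, v) ∈ θ₁ ∧ s(x, w) ∈ θ₁ ∧ s(u, x) ∈ θ₂ ∧ s(v, w) ∈ θ₂

/-- A polynomial with nonnegative coefficients is unimodal. -/
def PolyUnimodal (P : Polynomial ℕ) : Prop :=
  ∃ m : ℕ, (∀ i, i < m → P.coeff i ≤ P.coeff (i + 1)) ∧
    (∀ i, m ≤ i → P.coeff (i + 1) ≤ P.coeff i)

/-!
In a median graph every halfspace `W_ab` is convex. On a geodesic leaving `W_ab`, the vertex outside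
`W_ab` farthest from `a` has both neighbours closer to `a`; completing the square there towards `a`
either lowers the total distance of the geodesic to `a` or splits it into two shorter geodesics
leaving `W_ab`. Convexity gives `W_uv = W_ab` for every edge `uv` in the Θ-class of `ab`, so a
Θ-class is determined by its cut and crossing is the nonemptiness of the four quadrants.

For convex `S`, distances in `G[S]` are those of `G`, so the Θ-classes of `G[S]` are the traces of
the Θ-classes of `G` occurring in `S`. A quadrant met in `G` is met in `S`: the median of a vertex of
`S` on each side and a vertex of the quadrant lies in `S` and in both halfspaces.
-/

section

variable {V : Type*} {G : SimpleGraph V}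

theorem IsMedianGraph.dist_add_dist_of_adj (hmed : IsMedianGraph G) {u v : V} (huv : G.Adj u v)
    (w : V) : G.dist v u + G.dist u w = G.dist v w ∨ G.dist u v + G.dist v w = G.dist u w := by
  obtain ⟨m, ⟨h₁, h₂, h₃⟩, -⟩ := hmed.2 u v w
  rw [dist_eq_one_iff_adj.mpr huv] at h₁
  obtain hm | hm : G.dist u m = 0 ∨ G.dist m v = 0 := by omega
  · rw [← hmed.1.dist_eq_zero_iff.mp hm] at h₃
    exact Or.inl h₃
  · rw [hmed.1.dist_eq_zero_iff.mp hm] at h₂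
    exact Or.inr h₂

theorem IsMedianGraph.dist_adj_cases (hmed : IsMedianGraph G) {a b : V} (hab : G.Adj a b)
    (w : V) : G.dist b w = G.dist a w + 1 ∨ G.dist a w = G.dist b w + 1 := by
  have h₁ := dist_eq_one_iff_adj.mpr hab
  have h₂ := dist_eq_one_iff_adj.mpr hab.symm
  have := hmed.dist_add_dist_of_adj hab w
  omega

theorem mem_sideW {a b w : V} : w ∈ sideW G a b ↔ G.dist a w < G.dist b w := Iff.rfl

theorem IsMedianGraph.mem_sideW_iff (hmed : IsMedianGraph G) {a b w : V} (hab : G.Adj a b) :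
    w ∈ sideW G a b ↔ G.dist b w = G.dist a w + 1 := by
  have := hmed.dist_adj_cases hab w
  rw [mem_sideW]
  omega

theorem IsMedianGraph.notMem_sideW_iff (hmed : IsMedianGraph G) {a b w : V} (hab : G.Adj a b) :
    w ∉ sideW G a b ↔ w ∈ sideW G b a := by
  rw [hmed.mem_sideW_iff hab, hmed.mem_sideW_iff hab.symm]
  have := hmed.dist_adj_cases hab w
  omega

theorem mem_sideW_self {a b : V} (hab : G.Adj a b) : a ∈ sideW G a b := by
  simp [sideW, dist_comm, dist_eq_one_iff_adj.mpr hab]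

theorem IsMedianGraph.dist_of_adj_across (hmed : IsMedianGraph G) {a b u v : V}
    (hab : G.Adj a b) (huv : G.Adj u v) (hu : u ∈ sideW G a b) (hv : v ∈ sideW G b a) :
    G.dist a v = G.dist a u + 1 ∧ G.dist b u = G.dist b v + 1 := by
  rw [hmed.mem_sideW_iff hab] at hu
  rw [hmed.mem_sideW_iff hab.symm] at hv
  have ha := hmed.dist_adj_cases huv a
  have hb := hmed.dist_adj_cases huv b
  simp only [dist_comm (v := a), dist_comm (v := b)] at ha hb
  omega

theorem IsMedianGraph.exists_adj_adj_of_dist_eq_two (hmed : IsMedianGraph G) {u w z : V}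
    (huw : G.dist u w = 2) (hz : G.dist z u = G.dist z w) :
    ∃ m, G.Adj u m ∧ G.Adj m w ∧ G.dist z m + 1 = G.dist z u := by
  obtain ⟨m, ⟨h₁, h₂, h₃⟩, -⟩ := hmed.2 u w z
  have := dist_comm (G := G) (u := w) (v := m)
  have := dist_comm (G := G) (u := z) (v := m)
  have := dist_comm (G := G) (u := z) (v := u)
  have := dist_comm (G := G) (u := z) (v := w)
  refine ⟨m, dist_eq_one_iff_adj.mp ?_, dist_eq_one_iff_adj.mp ?_, ?_⟩ <;> omega

theorem IsMedianGraph.mem_sideW_of_adj_of_adj (hmed : IsMedianGraph G) {a b u v w : V}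
    (hab : G.Adj a b) (hu : u ∈ sideW G a b) (hw : w ∈ sideW G a b) (huw : G.dist u w = 2)
    (huv : G.Adj u v) (hvw : G.Adj v w) : v ∈ sideW G a b := by
  by_contra hv
  rw [hmed.notMem_sideW_iff hab] at hv
  obtain ⟨hav, hbu⟩ := hmed.dist_of_adj_across hab huv hu hv
  obtain ⟨hav', hbw⟩ := hmed.dist_of_adj_across hab hvw.symm hw hv
  have hv' := (hmed.mem_sideW_iff hab.symm).mp hv
  obtain ⟨m, hum, hmw, ham⟩ := hmed.exists_adj_adj_of_dist_eq_two huw (z := a) (by omega)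
  have hbm : G.dist b m ≤ G.dist b a + G.dist a m := hmed.1.dist_triangle
  have hbu' : G.dist b u ≤ G.dist b m + G.dist m u := hmed.1.dist_triangle
  have := dist_eq_one_iff_adj.mpr hab.symm
  have := dist_eq_one_iff_adj.mpr hum; have := dist_eq_one_iff_adj.mpr hum.symm
  have := dist_eq_one_iff_adj.mpr hmw; have := dist_eq_one_iff_adj.mpr hmw.symm
  have := dist_eq_one_iff_adj.mpr huv; have := dist_eq_one_iff_adj.mpr hvw
  have := dist_eq_one_iff_adj.mpr hvw.symm
  have := dist_comm (G := G) (u := m) (v := b); have := dist_comm (G := G) (u := u) (v := b)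
  have := dist_comm (G := G) (u := w) (v := b); have := dist_comm (G := G) (u := v) (v := b)
  -- `v` and the square completion `m` towards `a` are both medians of `u`, `w` and `b`
  have hmv : m = v :=
    (hmed.2 u w b).unique (y₁ := m) ⟨by omega, by omega, by omega⟩ ⟨by omega, by omega, by omega⟩
  subst hmv
  omega

def IsGeodesicSeq (G : SimpleGraph V) (f : ℕ → V) (r : ℕ) : Prop :=
  ∀ i j, i ≤ j → j ≤ r → G.dist (f i) (f j) = j - i

namespace IsGeodesicSeq

variable {f : ℕ → V} {r : ℕ}

theorem of_adj (hconn : G.Connected) (hadj : ∀ i < r, G.Adj (f i) (f (i + 1)))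
    (hr : G.dist (f 0) (f r) = r) : IsGeodesicSeq G f r := by
  have hle : ∀ i j, i ≤ j → j ≤ r → G.dist (f i) (f j) ≤ j - i := by
    intro i j
    induction j with
    | zero => intro hi _; simp [Nat.le_zero.mp hi]
    | succ j ih =>
      intro hij hj
      rcases Nat.eq_or_lt_of_le hij with rfl | hij
      · simp
      have := hconn.dist_triangle (u := f i) (v := f j) (w := f (j + 1))
      have := dist_eq_one_iff_adj.mpr (hadj j hj)
      have := ih (by omega) (by omega)
      omega
  intro i j hij hj
  have := hconn.dist_triangle (u := f 0) (v := f i) (w := f r)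
  have := hconn.dist_triangle (u := f i) (v := f j) (w := f r)
  have := hle 0 i (by omega) (by omega)
  have := hle i j hij hj
  have := hle j r hj le_rfl
  omega

theorem _root_.SimpleGraph.Walk.isGeodesicSeq_getVert (hconn : G.Connected) {u v : V}
    (p : G.Walk u v) (hp : p.length = G.dist u v) : IsGeodesicSeq G p.getVert p.length :=
  of_adj hconn (fun _ hi => p.adj_getVert_succ hi) (by rw [p.getVert_zero, p.getVert_length, hp])

theorem dist_eq (hf : IsGeodesicSeq G f r) {i j : ℕ} (hi : i ≤ r) (hj : j ≤ r) :
    G.dist (f i) (f j) = (j - i) + (i - j) := by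
  rcases le_total i j with hij | hji
  · rw [hf i j hij hj]; omega
  · rw [dist_comm, hf j i hji hi]; omega

theorem adj (hf : IsGeodesicSeq G f r) {i : ℕ} (hi : i < r) : G.Adj (f i) (f (i + 1)) :=
  dist_eq_one_iff_adj.mp (by rw [hf i (i + 1) (by omega) hi]; omega)

theorem mono (hf : IsGeodesicSeq G f r) {r' : ℕ} (h : r' ≤ r) : IsGeodesicSeq G f r' :=
  fun i j hij hj => hf i j hij (hj.trans h)

theorem shift (hf : IsGeodesicSeq G f r) {k : ℕ} (hk : k ≤ r) :
    IsGeodesicSeq G (fun j => f (k + j)) (r - k) := by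
  intro i j hij hj
  rw [hf (k + i) (k + j) (by omega) (by omega)]
  omega

theorem update (hconn : G.Connected) (hf : IsGeodesicSeq G f r) {i : ℕ} {m : V}
    (hi : i + 2 ≤ r) (h₁ : G.Adj (f i) m) (h₂ : G.Adj m (f (i + 2))) :
    IsGeodesicSeq G (Function.update f (i + 1) m) r := by
  have hm : ∀ j ≤ r, j ≠ i + 1 → G.dist (f j) m = (j - (i + 1)) + ((i + 1) - j) := by
    intro j hj hji
    have := hf.dist_eq hj (by omega : i ≤ r)
    have := hf.dist_eq hj hi
    have := hconn.dist_triangle (u := f j) (v := f i) (w := m)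
    have := hconn.dist_triangle (u := f j) (v := f (i + 2)) (w := m)
    have := hconn.dist_triangle (u := f j) (v := m) (w := f i)
    have := hconn.dist_triangle (u := f j) (v := m) (w := f (i + 2))
    have := dist_eq_one_iff_adj.mpr h₁; have := dist_eq_one_iff_adj.mpr h₁.symm
    have := dist_eq_one_iff_adj.mpr h₂; have := dist_eq_one_iff_adj.mpr h₂.symm
    omega
  intro j k hjk hk
  rcases eq_or_ne j (i + 1) with rfl | hj <;> rcases eq_or_ne k (i + 1) with rfl | hk'
  · simp
  · rw [Function.update_self, Function.update_of_ne hk', dist_comm, hm k hk hk']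
    omega
  · rw [Function.update_of_ne hj, Function.update_self, hm j (by omega) hj]
    omega
  · rw [Function.update_of_ne hj, Function.update_of_ne hk']
    exact hf j k hjk hk

end IsGeodesicSeq

theorem IsMedianGraph.exists_peak (hmed : IsMedianGraph G) {a b : V} (hab : G.Adj a b)
    {f : ℕ → V} {r t : ℕ} (hf : IsGeodesicSeq G f r) (h₀ : f 0 ∈ sideW G a b)
    (hr : f r ∈ sideW G a b) (ht : t ≤ r) (hft : f t ∉ sideW G a b) :
    ∃ i, i + 2 ≤ r ∧ f (i + 1) ∉ sideW G a b ∧ G.dist a (f i) + 1 = G.dist a (f (i + 1)) ∧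
      G.dist a (f (i + 2)) + 1 = G.dist a (f (i + 1)) := by
  classical
  obtain ⟨k, hk, hmax⟩ := ((Finset.range (r + 1)).filter (f · ∉ sideW G a b)).exists_max_image
    (fun j => G.dist a (f j)) ⟨t, by simp [Nat.lt_succ_of_le ht, hft]⟩
  simp only [Finset.mem_filter, Finset.mem_range] at hk hmax
  have hnbr : ∀ j ≤ r, G.Adj (f j) (f k) → G.dist a (f j) + 1 = G.dist a (f k) := by
    intro j hj hadj
    by_cases hfj : f j ∈ sideW G a b
    · exact (hmed.dist_of_adj_across hab hadj hfj ((hmed.notMem_sideW_iff hab).mp hk.2)).1.symm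
    · have := hmax j ⟨by omega, hfj⟩
      have := hmed.dist_adj_cases hadj a
      rw [dist_comm (u := f j), dist_comm (u := f k)] at this
      omega
  obtain ⟨i, rfl⟩ : ∃ i, k = i + 1 :=
    Nat.exists_eq_succ_of_ne_zero (by rintro rfl; exact hk.2 h₀)
  have hir : i + 1 ≠ r := by rintro rfl; exact hk.2 hr
  exact ⟨i, by omega, hk.2, hnbr i (by omega) (hf.adj (by omega)),
    hnbr (i + 2) (by omega) (hf.adj (by omega)).symm⟩

theorem IsMedianGraph.mem_sideW_of_isGeodesicSeq (hmed : IsMedianGraph G) {a b : V}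
    (hab : G.Adj a b) {f : ℕ → V} {r : ℕ} (hf : IsGeodesicSeq G f r)
    (h₀ : f 0 ∈ sideW G a b) (hr : f r ∈ sideW G a b) {j : ℕ} (hj : j ≤ r) :
    f j ∈ sideW G a b := by
  induction r using Nat.strong_induction_on generalizing f j with
  | _ r ihr =>
  obtain ⟨n, hn⟩ : ∃ n, ∑ j ∈ Finset.range (r + 1), G.dist a (f j) = n := ⟨_, rfl⟩
  induction n using Nat.strong_induction_on generalizing f j with
  | _ n ihn =>
  by_contra hfj
  obtain ⟨i, hi, hpeak, hleft, hright⟩ := hmed.exists_peak hab hf h₀ hr hj hfj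
  have h₂ : G.dist (f i) (f (i + 2)) = 2 := by rw [hf i (i + 2) (by omega) hi]; omega
  obtain ⟨m, him, hmi, hm⟩ := hmed.exists_adj_adj_of_dist_eq_two (z := a) h₂ (by omega)
  have hg := hf.update hmed.1 hi him hmi
  have hgm : Function.update f (i + 1) m (i + 1) = m := Function.update_self ..
  have hg₀ : Function.update f (i + 1) m 0 ∈ sideW G a b := by
    rwa [Function.update_of_ne (by omega)]
  have hgr : Function.update f (i + 1) m r ∈ sideW G a b := by
    rwa [Function.update_of_ne (by omega)]
  by_cases hmW : m ∈ sideW G a b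
  · rw [← hgm] at hmW
    have hl := ihr (i + 1) (by omega) (hg.mono (by omega)) hg₀ hmW (j := i) (by omega)
    have hr' := ihr (r - (i + 1)) (by omega) (hg.shift (by omega)) hmW
      (by rwa [show i + 1 + (r - (i + 1)) = r by omega]) (j := 1) (by omega)
    rw [Function.update_of_ne (by omega)] at hl hr'
    exact hpeak (hmed.mem_sideW_of_adj_of_adj hab hl hr' h₂ (hf.adj (by omega)) (hf.adj hi))
  · refine hmW (hgm ▸ ihn _ ?_ hg hg₀ hgr (j := i + 1) (by omega) rfl)
    rw [← hn]
    apply Finset.sum_lt_sum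
    · intro j _
      rcases eq_or_ne j (i + 1) with rfl | hji
      · rw [hgm]; omega
      · rw [Function.update_of_ne hji]
    · exact ⟨i + 1, by simp; omega, by rw [hgm]; omega⟩

theorem IsMedianGraph.mem_sideW_of_dist_add_dist (hmed : IsMedianGraph G) {a b x y v : V}
    (hab : G.Adj a b) (hx : x ∈ sideW G a b) (hy : y ∈ sideW G a b)
    (hv : G.dist x v + G.dist v y = G.dist x y) : v ∈ sideW G a b := by
  obtain ⟨p, hp⟩ := hmed.1.exists_walk_length_eq_dist x v
  obtain ⟨q, hq⟩ := hmed.1.exists_walk_length_eq_dist v y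
  have hpq : (p.append q).length = G.dist x y := by rw [Walk.length_append, hp, hq, hv]
  have := hmed.mem_sideW_of_isGeodesicSeq hab ((p.append q).isGeodesicSeq_getVert hmed.1 hpq)
    (by rwa [Walk.getVert_zero]) (by rwa [Walk.getVert_length]) (j := p.length) (by simp)
  rwa [Walk.getVert_append', if_pos le_rfl, Walk.getVert_length] at this

theorem IsMedianGraph.sideW_subset_of_adj_across (hmed : IsMedianGraph G) {a b u v : V}
    (hab : G.Adj a b) (huv : G.Adj u v) (hu : u ∈ sideW G a b) (hv : v ∈ sideW G b a) :
    sideW G a b ⊆ sideW G u v := by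
  intro w hw
  rcases hmed.dist_add_dist_of_adj huv w with h | h
  · have := dist_eq_one_iff_adj.mpr huv.symm
    rw [mem_sideW]
    omega
  · exact absurd (hmed.mem_sideW_of_dist_add_dist hab hu hw h) ((hmed.notMem_sideW_iff hab).mpr hv)

theorem IsMedianGraph.sideW_eq_of_adj_across (hmed : IsMedianGraph G) {a b u v : V}
    (hab : G.Adj a b) (huv : G.Adj u v) (hu : u ∈ sideW G a b) (hv : v ∈ sideW G b a) :
    sideW G u v = sideW G a b := by
  obtain ⟨hav, hbu⟩ := hmed.dist_of_adj_across hab huv hu hv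
  have ha : a ∈ sideW G u v := by rw [mem_sideW, dist_comm, dist_comm (u := v)]; omega
  have hb : b ∈ sideW G v u := by rw [mem_sideW, dist_comm, dist_comm (u := u)]; omega
  exact (hmed.sideW_subset_of_adj_across huv hab ha hb).antisymm
    (hmed.sideW_subset_of_adj_across hab huv hu hv)

theorem dwRel_mk_iff {a b u v : V} :
    DWRel G s(a, b) s(u, v) ↔ G.dist a u + G.dist b v ≠ G.dist a v + G.dist b u := by
  refine ⟨?_, fun h => ⟨a, b, u, v, rfl, rfl, h⟩⟩
  rintro ⟨a', b', u', v', he, hf, hne⟩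
  rw [Sym2.eq_iff] at he hf
  rcases he with ⟨rfl, rfl⟩ | ⟨rfl, rfl⟩ <;> rcases hf with ⟨rfl, rfl⟩ | ⟨rfl, rfl⟩ <;> omega

theorem mem_thetaClassOf_self {a b : V} (hab : G.Adj a b) : s(a, b) ∈ thetaClassOf G s(a, b) :=
  ⟨hab, dwRel_mk_iff.mpr (by simp [dist_eq_one_iff_adj.mpr hab, dist_eq_one_iff_adj.mpr hab.symm])⟩

theorem IsMedianGraph.mem_thetaClassOf_iff (hmed : IsMedianGraph G) {a b x y : V}
    (hab : G.Adj a b) :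
    s(x, y) ∈ thetaClassOf G s(a, b) ↔ G.Adj x y ∧
      (x ∈ sideW G a b ∧ y ∈ sideW G b a ∨ y ∈ sideW G a b ∧ x ∈ sideW G b a) := by
  have hdw : DWRel G s(a, b) s(x, y) ↔
      (x ∈ sideW G a b ∧ y ∈ sideW G b a ∨ y ∈ sideW G a b ∧ x ∈ sideW G b a) := by
    rw [dwRel_mk_iff, hmed.mem_sideW_iff hab, hmed.mem_sideW_iff hab.symm,
      hmed.mem_sideW_iff hab, hmed.mem_sideW_iff hab.symm]
    have := hmed.dist_adj_cases hab x
    have := hmed.dist_adj_cases hab y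
    omega
  exact and_congr Iff.rfl hdw

theorem IsMedianGraph.thetaClassOf_eq_of_sideW_eq (hmed : IsMedianGraph G) {a b u v : V}
    (hab : G.Adj a b) (huv : G.Adj u v) (h₁ : sideW G u v = sideW G a b)
    (h₂ : sideW G v u = sideW G b a) : thetaClassOf G s(u, v) = thetaClassOf G s(a, b) := by
  ext e
  induction e using Sym2.ind with
  | _ x y => rw [hmed.mem_thetaClassOf_iff hab, hmed.mem_thetaClassOf_iff huv, h₁, h₂]

theorem IsMedianGraph.sideW_eq_or_of_mem_thetaClassOf (hmed : IsMedianGraph G) {a b u v : V}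
    (hab : G.Adj a b) (h : s(u, v) ∈ thetaClassOf G s(a, b)) :
    sideW G u v = sideW G a b ∧ sideW G v u = sideW G b a ∨
      sideW G u v = sideW G b a ∧ sideW G v u = sideW G a b := by
  obtain ⟨huv, ⟨hu, hv⟩ | ⟨hv, hu⟩⟩ := (hmed.mem_thetaClassOf_iff hab).mp h
  · exact .inl ⟨hmed.sideW_eq_of_adj_across hab huv hu hv,
      hmed.sideW_eq_of_adj_across hab.symm huv.symm hv hu⟩
  · exact .inr ⟨hmed.sideW_eq_of_adj_across hab.symm huv hu hv,
      hmed.sideW_eq_of_adj_across hab huv.symm hv hu⟩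

theorem IsThetaClass.eq_thetaClassOf (hmed : IsMedianGraph G) {C : Set (Sym2 V)}
    (hC : IsThetaClass G C) {a b : V} (hab : G.Adj a b) (h : s(a, b) ∈ C) :
    C = thetaClassOf G s(a, b) := by
  obtain ⟨e, he, rfl⟩ := hC
  induction e using Sym2.ind with
  | _ u v =>
    obtain ⟨h₁, h₂⟩ | ⟨h₁, h₂⟩ := hmed.sideW_eq_or_of_mem_thetaClassOf he h
    · exact (hmed.thetaClassOf_eq_of_sideW_eq he hab h₁ h₂).symm
    · rw [Sym2.eq_swap (a := u)]
      exact (hmed.thetaClassOf_eq_of_sideW_eq he.symm hab h₁ h₂).symm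

def HalfspacesCross (G : SimpleGraph V) (a b u v : V) : Prop :=
  (sideW G a b ∩ sideW G u v).Nonempty ∧ (sideW G b a ∩ sideW G u v).Nonempty ∧
    (sideW G a b ∩ sideW G v u).Nonempty ∧ (sideW G b a ∩ sideW G v u).Nonempty

theorem IsMedianGraph.crosses_thetaClassOf_iff (hmed : IsMedianGraph G) {a b u v : V}
    (hab : G.Adj a b) (huv : G.Adj u v) :
    Crosses G (thetaClassOf G s(a, b)) (thetaClassOf G s(u, v)) ↔ HalfspacesCross G a b u v := by
  refine ⟨?_, fun h => ⟨a, b, u, v, hab, huv, rfl, rfl, h⟩⟩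
  rintro ⟨a', b', u', v', hab', huv', h₁, h₂, hcross⟩
  have ha := hmed.sideW_eq_or_of_mem_thetaClassOf hab' (h₁ ▸ mem_thetaClassOf_self hab)
  have hu := hmed.sideW_eq_or_of_mem_thetaClassOf huv' (h₂ ▸ mem_thetaClassOf_self huv)
  rcases ha with ⟨ha, hb⟩ | ⟨ha, hb⟩ <;> rcases hu with ⟨hu, hv⟩ | ⟨hu, hv⟩ <;>
    simp only [HalfspacesCross, ha, hb, hu, hv] <;> tauto

namespace ConvexSet

variable {S : Set V}

theorem mem_of_dist_add_dist (hconv : ConvexSet G S) (hconn : G.Connected) {x y m : V}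
    (hx : x ∈ S) (hy : y ∈ S) (hm : G.dist x m + G.dist m y = G.dist x y) : m ∈ S := by
  obtain ⟨p, hp⟩ := hconn.exists_walk_length_eq_dist x m
  obtain ⟨q, hq⟩ := hconn.exists_walk_length_eq_dist m y
  exact hconv x hx y hy (p.append q) (by rw [Walk.length_append, hp, hq, hm]) m
    ((Walk.mem_support_append_iff _ _).mpr (.inl p.end_mem_support))

theorem exists_walk_induce (hconv : ConvexSet G S) (hconn : G.Connected) (u v : S) :
    ∃ q : (G.induce S).Walk u v, q.length = G.dist u v := by
  obtain ⟨p, hp⟩ := hconn.exists_walk_length_eq_dist u v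
  have hw := hconv u u.2 v v.2 p hp
  have hlen := congrArg Walk.length (p.map_induce hw)
  rw [Walk.length_map] at hlen
  exact ⟨p.induce S hw, hlen.trans hp⟩

theorem dist_induce (hconv : ConvexSet G S) (hconn : G.Connected) (u v : S) :
    (G.induce S).dist u v = G.dist u v := by
  obtain ⟨q, hq⟩ := hconv.exists_walk_induce hconn u v
  refine le_antisymm (hq ▸ dist_le q) ?_
  obtain ⟨q', hq'⟩ := q.reachable.exists_walk_length_eq_dist
  rw [← hq', ← Walk.length_map (Embedding.induce S).toHom]
  exact dist_le _

theorem sideW_induce (hconv : ConvexSet G S) (hconn : G.Connected) (x y : S) :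
    sideW (G.induce S) x y = Subtype.val ⁻¹' sideW G x y := by
  ext w
  simp only [Set.mem_preimage, mem_sideW, hconv.dist_induce hconn]

theorem thetaClassOf_induce (hconv : ConvexSet G S) (hconn : G.Connected) (x y : S) :
    thetaClassOf (G.induce S) s(x, y) = Sym2.map Subtype.val ⁻¹' thetaClassOf G s(↑x, ↑y) := by
  ext e
  induction e using Sym2.ind with
  | _ p q =>
    rw [Set.mem_preimage, Sym2.map_mk]
    exact and_congr Iff.rfl (by simp only [dwRel_mk_iff, hconv.dist_induce hconn])

end ConvexSet

theorem IsMedianGraph.induce_of_convexSet (hmed : IsMedianGraph G) {S : Set V}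
    (hconv : ConvexSet G S) (hS : S.Nonempty) : IsMedianGraph (G.induce S) := by
  refine ⟨(connected_iff _).mpr ⟨fun u v => ⟨(hconv.exists_walk_induce hmed.1 u v).choose⟩,
    hS.to_subtype⟩, fun u v w => ?_⟩
  simp only [hconv.dist_induce hmed.1]
  obtain ⟨m, hm, huniq⟩ := hmed.2 u v w
  exact ⟨⟨m, hconv.mem_of_dist_add_dist hmed.1 u.2 v.2 hm.1⟩, hm,
    fun m' hm' => Subtype.ext (huniq m' hm')⟩

theorem IsMedianGraph.nonempty_sideW_inter_induce_iff (hmed : IsMedianGraph G) {S : Set V}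
    (hconv : ConvexSet G S) {x y p q : S} (hxy : G.Adj x y) (hpq : G.Adj p q) :
    (sideW (G.induce S) x y ∩ sideW (G.induce S) p q).Nonempty ↔
      (sideW G x y ∩ sideW G p q).Nonempty := by
  rw [hconv.sideW_induce hmed.1, hconv.sideW_induce hmed.1, ← Set.preimage_inter]
  refine ⟨fun ⟨w, hw⟩ => ⟨w, hw⟩, fun ⟨z, hzx, hzp⟩ => ?_⟩
  obtain ⟨m, ⟨h₁, h₂, h₃⟩, -⟩ := hmed.2 x p z
  exact ⟨⟨m, hconv.mem_of_dist_add_dist hmed.1 x.2 p.2 h₁⟩,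
    hmed.mem_sideW_of_dist_add_dist hxy (mem_sideW_self hxy) hzx h₂,
    hmed.mem_sideW_of_dist_add_dist hpq (mem_sideW_self hpq) hzp h₃⟩

theorem IsMedianGraph.crosses_induce_iff (hmed : IsMedianGraph G) {S : Set V}
    (hconv : ConvexSet G S) {x y p q : S} (hxy : G.Adj x y) (hpq : G.Adj p q) :
    Crosses (G.induce S) (thetaClassOf (G.induce S) s(x, y)) (thetaClassOf (G.induce S) s(p, q)) ↔
      Crosses G (thetaClassOf G s(↑x, ↑y)) (thetaClassOf G s(↑p, ↑q)) := by
  rw [(hmed.induce_of_convexSet hconv ⟨x, x.2⟩).crosses_thetaClassOf_iff hxy hpq,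
    hmed.crosses_thetaClassOf_iff hxy hpq]
  simp only [HalfspacesCross, hmed.nonempty_sideW_inter_induce_iff hconv, hxy, hxy.symm, hpq,
    hpq.symm]

theorem IsMedianGraph.isThetaClass_induce_preimage (hmed : IsMedianGraph G) {S : Set V}
    (hconv : ConvexSet G S) {C : Set (Sym2 V)} (hC : IsThetaClass G C) (hCS : OccursIn G C S) :
    IsThetaClass (G.induce S) (Sym2.map Subtype.val ⁻¹' C) := by
  obtain ⟨a, b, hab, ha, hb, habC⟩ := hCS
  rw [hC.eq_thetaClassOf hmed hab habC, ← hconv.thetaClassOf_induce hmed.1 ⟨a, ha⟩ ⟨b, hb⟩]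
  exact ⟨s(⟨a, ha⟩, ⟨b, hb⟩), hab, rfl⟩

theorem IsMedianGraph.eq_of_preimage_val_eq (hmed : IsMedianGraph G) {S : Set V}
    {C₁ C₂ : Set (Sym2 V)} (hC₁ : IsThetaClass G C₁) (hC₂ : IsThetaClass G C₂)
    (hCS : OccursIn G C₁ S)
    (h : Sym2.map ((↑) : S → V) ⁻¹' C₁ = Sym2.map ((↑) : S → V) ⁻¹' C₂) :
    C₁ = C₂ := by
  obtain ⟨a, b, hab, ha, hb, habC⟩ := hCS
  have habC₂ : s(⟨a, ha⟩, ⟨b, hb⟩) ∈ Sym2.map Subtype.val ⁻¹' C₂ := h ▸ habC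
  rw [hC₁.eq_thetaClassOf hmed hab habC, hC₂.eq_thetaClassOf hmed hab habC₂]

theorem IsMedianGraph.exists_preimage_val_eq (hmed : IsMedianGraph G) {S : Set V}
    (hconv : ConvexSet G S) {D : Set (Sym2 S)} (hD : IsThetaClass (G.induce S) D) :
    ∃ C, IsThetaClass G C ∧ OccursIn G C S ∧ Sym2.map Subtype.val ⁻¹' C = D := by
  obtain ⟨e, he, rfl⟩ := hD
  induction e using Sym2.ind with
  | _ x y =>
    exact ⟨thetaClassOf G s(↑x, ↑y), ⟨s(↑x, ↑y), he, rfl⟩,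
      ⟨x, y, he, x.2, y.2, mem_thetaClassOf_self he⟩, (hconv.thetaClassOf_induce hmed.1 x y).symm⟩

theorem IsMedianGraph.crosses_preimage_val_iff (hmed : IsMedianGraph G) {S : Set V}
    (hconv : ConvexSet G S) {C₁ C₂ : Set (Sym2 V)} (hC₁ : IsThetaClass G C₁)
    (hC₂ : IsThetaClass G C₂) (hC₁S : OccursIn G C₁ S) (hC₂S : OccursIn G C₂ S) :
    Crosses (G.induce S) (Sym2.map Subtype.val ⁻¹' C₁) (Sym2.map Subtype.val ⁻¹' C₂) ↔
      Crosses G C₁ C₂ := by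
  obtain ⟨a, b, hab, ha, hb, habC⟩ := hC₁S
  obtain ⟨u, v, huv, hu, hv, huvC⟩ := hC₂S
  rw [hC₁.eq_thetaClassOf hmed hab habC, hC₂.eq_thetaClassOf hmed huv huvC,
    ← hconv.thetaClassOf_induce hmed.1 ⟨a, ha⟩ ⟨b, hb⟩,
    ← hconv.thetaClassOf_induce hmed.1 ⟨u, hu⟩ ⟨v, hv⟩]
  exact hmed.crosses_induce_iff hconv hab huv

end

theorem crossingGraph_of_convex_is_induced_subgraph_general {V : Type*}
    (G : SimpleGraph V) (hmed : IsMedianGraph G) (S : Set V) (hconv : ConvexSet G S) :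
    ∃ φ : (crossingGraph (G.induce S)) ≃g
        ((crossingGraph G).induce
          {C : {D : Set (Sym2 V) // IsThetaClass G D} | OccursIn G C.1 S}),
      ∀ (D : {C : Set (Sym2 ↥S) // IsThetaClass (G.induce S) C}) (e : Sym2 ↥S),
        e ∈ D.1 → Sym2.map Subtype.val e ∈ ((φ D).1 : {D : Set (Sym2 V) // IsThetaClass G D}).1 := by
  let ψ : {C : {D : Set (Sym2 V) // IsThetaClass G D} | OccursIn G C.1 S} →
      {C : Set (Sym2 S) // IsThetaClass (G.induce S) C} :=
    fun C => ⟨Sym2.map Subtype.val ⁻¹' C.1.1, hmed.isThetaClass_induce_preimage hconv C.1.2 C.2⟩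
  have hψ : Function.Bijective ψ := by
    refine ⟨fun C₁ C₂ h => Subtype.ext (Subtype.ext ?_), fun D => ?_⟩
    · exact hmed.eq_of_preimage_val_eq C₁.1.2 C₂.1.2 C₁.2 (congrArg Subtype.val h)
    · obtain ⟨C, hC, hCS, hD⟩ := hmed.exists_preimage_val_eq hconv D.2
      exact ⟨⟨⟨C, hC⟩, hCS⟩, Subtype.ext hD⟩
  let φ : (crossingGraph G).induce {C | OccursIn G C.1 S} ≃g crossingGraph (G.induce S) := ⟨Equiv.ofBijective ψ hψ, fun {C₁ C₂} =>
    and_congr (hψ.1.ne_iff.trans Subtype.coe_ne_coe.symm)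
      (hmed.crosses_preimage_val_iff hconv C₁.1.2 C₂.1.2 C₁.2 C₂.2)⟩
  refine ⟨φ.symm, fun D e he => ?_⟩
  rwa [← Equiv.ofBijective_apply_symm_apply ψ hψ D] at he

/-- For a convex subgraph `H = G[S]` of a finite median graph `G`, the
crossing graph `H^#` is isomorphic to the subgraph of `G^#` induced on the Θ-classes of `G`
occurring in `H`, via the map sending each Θ-class of `H` to the (unique) Θ-class of `G`
containing (the image of) each of its edges. -/
theorem crossingGraph_of_convex_is_induced_subgraph {V : Type*} [Finite V]
    (G : SimpleGraph V) (hmed : IsMedianGraph G) (S : Set V) (hconv : ConvexSet G S) :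
    ∃ φ : (crossingGraph (G.induce S)) ≃g
        ((crossingGraph G).induce
          {C : {D : Set (Sym2 V) // IsThetaClass G D} | OccursIn G C.1 S}),
      ∀ (D : {C : Set (Sym2 ↥S) // IsThetaClass (G.induce S) C}) (e : Sym2 ↥S),
        e ∈ D.1 → Sym2.map Subtype.val e ∈ ((φ D).1 : {D : Set (Sym2 V) // IsThetaClass G D}).1 :=
  crossingGraph_of_convex_is_induced_subgraph_general G hmed S hconv
end

section
/- Let G be a finite connected partial cube and uv an edge of G. Then the subgraph of G induced by W_uv = {w ∈ V(G) : d(u,w) < d(v,w)} is a convex subgraph of G (and likewise for W_vu). -/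
open SimpleGraph Polynomial

/-!
Under an isometric embedding `f` of `G` into a hypercube, `d(a, b)` is the Hamming distance of
`f a` and `f b`. An edge `uv` flips exactly one coordinate `i`, and `W_{uv}` is the preimage of
the half-cube `{x | x i = f u i}`. A vertex on a geodesic from `a` to `b` is metrically between
them, and in a Hamming space a point between `x` and `z` agrees with them wherever they agree;
so half-cubes, and with them the sets `W_{uv}`, are convex.
-/

open Finset

section Hamming

variable {ι : Type*} [Fintype ι] {β : ι → Type*} [∀ i, DecidableEq (β i)]

lemma hammingDist_eq_hammingDist_add_one {x x' w : ∀ i, β i} {i : ι}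
    (hxx' : ∀ j ≠ i, x j = x' j) (hx : x i ≠ w i) (hx' : x' i = w i) :
    hammingDist x w = hammingDist x' w + 1 := by
  classical
  have hsupp :
      univ.filter (fun j => x j ≠ w j) = insert i (univ.filter fun j => x' j ≠ w j) := by
    ext j
    rcases eq_or_ne j i with rfl | hj
    · simp [hx]
    · simp [hj, hxx' j hj]
  rw [hammingDist, hammingDist, hsupp, card_insert_of_notMem (by simp [hx'])]

lemma apply_eq_of_hammingDist_add_hammingDist_eq {x y z : ∀ i, β i}
    (h : hammingDist x y + hammingDist y z = hammingDist x z) {i : ι} (hi : x i = z i) :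
    y i = x i := by
  classical
  by_contra hyi
  have hxy : x i ≠ y i := Ne.symm hyi
  have hyz : y i ≠ z i := hi ▸ hyi
  simp only [hammingDist] at h
  set A := univ.filter fun j => x j ≠ y j
  set B := univ.filter fun j => y j ≠ z j
  have hsub : univ.filter (fun j => x j ≠ z j) ⊆ A ∪ B := by
    intro j
    simp only [A, B, mem_filter, mem_univ, true_and, mem_union]
    exact fun hj => (hj.ne_or_ne (y j)).imp_right Ne.symm
  have hAB : (A ∩ B).Nonempty := ⟨i, by simp [A, B, hxy, hyz]⟩
  have hunion := card_union_add_card_inter A B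
  have hle := card_le_card hsub
  have hpos := hAB.card_pos
  omega

end Hamming

namespace hypercube

variable {n : ℕ}

lemma hammingDist_eq_one_of_adj {x y : Fin n → Bool} (h : (hypercube n).Adj x y) :
    hammingDist x y = 1 := by
  obtain ⟨i, hi, huniq⟩ := h
  rw [hammingDist, card_eq_one]
  exact ⟨i, by ext j; simpa using ⟨huniq j, fun hj => hj ▸ hi⟩⟩

lemma hammingDist_le_length {x y : Fin n → Bool} (p : (hypercube n).Walk x y) :
    hammingDist x y ≤ p.length := by
  induction p with
  | nil => simp
  | cons h p ih =>
    calc hammingDist _ _ ≤ hammingDist _ _ + hammingDist _ _ := hammingDist_triangle _ _ _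
      _ ≤ p.length + 1 := by rw [hammingDist_eq_one_of_adj h]; omega
      _ = _ := (Walk.length_cons _ _).symm

lemma exists_walk_length_eq_hammingDist (x y : Fin n → Bool) :
    ∃ p : (hypercube n).Walk x y, p.length = hammingDist x y := by
  induction hk : hammingDist x y generalizing x with
  | zero => exact hammingDist_eq_zero.mp hk ▸ ⟨.nil, rfl⟩
  | succ k ih =>
    obtain ⟨i, hi⟩ : ∃ i, x i ≠ y i :=
      Function.ne_iff.mp (hammingDist_ne_zero.mp (by omega))
    have hoff : ∀ j ≠ i, x j = Function.update x i (y i) j := fun j hj =>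
      (Function.update_of_ne hj _ _).symm
    have hadj : (hypercube n).Adj x (Function.update x i (y i)) :=
      ⟨i, by simpa using hi, fun j hj => by_contra fun hji => hj (hoff j hji)⟩
    have hstep := hammingDist_eq_hammingDist_add_one hoff hi (by simp)
    obtain ⟨p, hp⟩ := ih (Function.update x i (y i)) (by omega)
    exact ⟨.cons hadj p, by simp [hp]⟩

lemma dist_eq_hammingDist (x y : Fin n → Bool) :
    (hypercube n).dist x y = hammingDist x y := by
  obtain ⟨p, hp⟩ := exists_walk_length_eq_hammingDist x y
  obtain ⟨q, hq⟩ := p.reachable.exists_walk_length_eq_dist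
  exact le_antisymm (hp ▸ SimpleGraph.dist_le p) (hq ▸ hammingDist_le_length q)

end hypercube

lemma SimpleGraph.Walk.dist_add_dist_eq_of_mem_support {V : Type*} {G : SimpleGraph V}
    {u v y : V} (p : G.Walk u v) (hp : p.length = G.dist u v) (hy : y ∈ p.support) :
    G.dist u y + G.dist y v = G.dist u v := by
  classical
  rw [← length_eq_dist_of_subwalk hp (p.isSubwalk_takeUntil hy),
    ← length_eq_dist_of_subwalk hp (p.isSubwalk_dropUntil hy), ← length_append, p.take_spec hy,
    hp]

lemma ConvexSet.of_dist_add_dist_eq {V : Type*} {G : SimpleGraph V} {S : Set V}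
    (hS : ∀ a ∈ S, ∀ b ∈ S, ∀ y, G.dist a y + G.dist y b = G.dist a b → y ∈ S) :
    ConvexSet G S :=
  fun a ha b hb p hp y hy => hS a ha b hb y (p.dist_add_dist_eq_of_mem_support hp hy)

section HammingEmbedding

variable {V : Type*} {G : SimpleGraph V} {n : ℕ} {f : V → Fin n → Bool}

lemma convexSet_setOf_apply_eq (hf : ∀ a b, hammingDist (f a) (f b) = G.dist a b)
    (i : Fin n) (c : Bool) : ConvexSet G {w | f w i = c} := by
  refine ConvexSet.of_dist_add_dist_eq fun a ha b hb y hy => ?_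
  rw [← hf, ← hf, ← hf] at hy
  exact (apply_eq_of_hammingDist_add_hammingDist_eq hy (ha.trans hb.symm)).trans ha

lemma sideW_eq_setOf_apply_eq (hf : ∀ a b, hammingDist (f a) (f b) = G.dist a b)
    {u v : V} (huv : G.Adj u v) : ∃ i, sideW G u v = {w | f w i = f u i} := by
  have hcube : (hypercube n).Adj (f u) (f v) := by
    rw [← SimpleGraph.dist_eq_one_iff_adj, hypercube.dist_eq_hammingDist, hf,
      SimpleGraph.dist_eq_one_iff_adj]
    exact huv
  obtain ⟨i, hi, huniq⟩ := hcube
  have hoff : ∀ j ≠ i, f v j = f u j := fun j hj => by_contra fun h => hj (huniq j (Ne.symm h))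
  refine ⟨i, Set.ext fun w => ?_⟩
  simp only [sideW, Set.mem_ofPred_eq, ← hf]
  by_cases hw : f w i = f u i
  · have := hammingDist_eq_hammingDist_add_one hoff (by rw [hw]; exact hi.symm) hw.symm
    exact iff_of_true (by omega) hw
  · -- `Bool` has two values, so `w` sits on `v`'s side of coordinate `i`.
    have hwv : f v i = f w i := by
      rw [Bool.eq_not_iff.mpr (Ne.symm hi), Bool.eq_not_iff.mpr hw]
    have := hammingDist_eq_hammingDist_add_one (fun j hj => (hoff j hj).symm) (Ne.symm hw) hwv
    exact iff_of_false (by omega) hw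

lemma convexSet_sideW (hf : ∀ a b, hammingDist (f a) (f b) = G.dist a b) {u v : V}
    (huv : G.Adj u v) : ConvexSet G (sideW G u v) := by
  obtain ⟨i, hi⟩ := sideW_eq_setOf_apply_eq hf huv
  exact hi ▸ convexSet_setOf_apply_eq hf i _

end HammingEmbedding

theorem sideW_convex_general {V : Type*} (G : SimpleGraph V) (hpc : IsPartialCube G)
    {u v : V} (huv : G.Adj u v) :
    ConvexSet G (sideW G u v) ∧ ConvexSet G (sideW G v u) := by
  obtain ⟨-, n, f, -, hf⟩ := hpc
  simp only [hypercube.dist_eq_hammingDist] at hf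
  exact ⟨convexSet_sideW hf huv, convexSet_sideW hf huv.symm⟩

/-- In a finite connected partial cube `G`, for every edge `uv` the set
`W_{uv}` (and likewise `W_{vu}`) induces a convex subgraph of `G`. -/
theorem sideW_convex {V : Type*} [Finite V] (G : SimpleGraph V) (hpc : IsPartialCube G)
    {u v : V} (huv : G.Adj u v) :
    ConvexSet G (sideW G u v) ∧ ConvexSet G (sideW G v u) :=
  sideW_convex_general G hpc huv
end
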